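/- The eight elements ω₁, ω₂, ω₃, ω₄, η₁, η₂, η₃, η₄ form a K-basis of A, and each of them is group-like: Δ(a) = a ⊗ a and ε(a) = 1 for every element a of this basis. -/

import Mathlib

open TensorProduct

/-- The defining relations of the second example: `x⁴ = 1`, `xy = yx³`, and
`y² = (1/2)(ζ + x - ζx² + x³)`. -/
inductive SecondRel (K : Type*) [Field K] (ζ : K) :
    FreeAlgebra K (Fin 2) → FreeAlgebra K (Fin 2) → Prop
  | x_pow_four : SecondRel K ζ (FreeAlgebra.ι K 0 ^ 4) 1
  | x_mul_y : SecondRel K ζ (FreeAlgebra.ι K 0 * FreeAlgebra.ι K 1)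
      (FreeAlgebra.ι K 1 * FreeAlgebra.ι K 0 ^ 3)
  | y_sq : SecondRel K ζ (FreeAlgebra.ι K 1 ^ 2)
      ((2 : K)⁻¹ • (ζ • (1 : FreeAlgebra K (Fin 2)) + FreeAlgebra.ι K 0
        - ζ • (FreeAlgebra.ι K 0 ^ 2) + FreeAlgebra.ι K 0 ^ 3))

/-- The second example: the `K`-algebra generated by noncommuting elements `x`, `y`
subject to `x⁴ = 1`, `xy = yx³` and `y² = (1/2)(ζ + x - ζx² + x³)`. -/
abbrev SecondAlg (K : Type*) [Field K] (ζ : K) : Type _ := RingQuot (SecondRel K ζ)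

/-- The generator `x` of the second example. -/
noncomputable def xS (K : Type*) [Field K] (ζ : K) : SecondAlg K ζ :=
  RingQuot.mkAlgHom K (SecondRel K ζ) (FreeAlgebra.ι K 0)

/-- The generator `y` of the second example. -/
noncomputable def yS (K : Type*) [Field K] (ζ : K) : SecondAlg K ζ :=
  RingQuot.mkAlgHom K (SecondRel K ζ) (FreeAlgebra.ι K 1)

/-- The group `G = ℤ/2 × ℤ/2`, written multiplicatively. -/
abbrev GG : Type := Multiplicative (ZMod 2 × ZMod 2)

/-- `g₁ = (0,0)`. -/
def g1 : GG := Multiplicative.ofAdd (0, 0)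
/-- `g₂ = (1,0)`. -/
def g2 : GG := Multiplicative.ofAdd (1, 0)
/-- `g₃ = (0,1)`. -/
def g3 : GG := Multiplicative.ofAdd (0, 1)
/-- `g₄ = (1,1)`. -/
def g4 : GG := Multiplicative.ofAdd (1, 1)

/-- The twisted multiplication of `A ⊗̂ A`:
`(a ⊗ b)(a' ⊗ b') = (1/4) ∑_{g,g'} θ(g,g') (a (g.a')) ⊗ ((g'.b) b')`,
extended bilinearly. -/
noncomputable def twMul {K : Type*} [Field K] {B : Type*} [Ring B] [Algebra K B]
    {G : Type*} [Monoid G] [Fintype G]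
    (ρ : G →* (B →ₐ[K] B)) (θ : G → G → K)
    (z w : B ⊗[K] B) : B ⊗[K] B :=
  (4 : K)⁻¹ • ∑ g : G, ∑ g' : G, θ g g' •
    (TensorProduct.map (LinearMap.mul' K B) (LinearMap.mul' K B))
      ((TensorProduct.tensorTensorTensorComm K B B B B)
        ((TensorProduct.map
            (TensorProduct.map LinearMap.id (ρ g').toLinearMap)
            (TensorProduct.map (ρ g).toLinearMap LinearMap.id))
          (z ⊗ₜ[K] w)))

section Arel
variable {K : Type*} [Field K] {ζ : K}

lemma hx4 : xS K ζ ^ 4 = 1 := by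
  have := RingQuot.mkAlgHom_rel K (SecondRel.x_pow_four (K := K) (ζ := ζ))
  simpa [xS, map_pow] using this

lemma hxyr : xS K ζ * yS K ζ = yS K ζ * xS K ζ ^ 3 := by
  have := RingQuot.mkAlgHom_rel K (SecondRel.x_mul_y (K := K) (ζ := ζ))
  simpa [xS, yS, map_mul, map_pow] using this

lemma hy2 : yS K ζ ^ 2 =
    (2 : K)⁻¹ • (ζ • (1 : SecondAlg K ζ) + xS K ζ - ζ • (xS K ζ ^ 2) + xS K ζ ^ 3) := by
  have := RingQuot.mkAlgHom_rel K (SecondRel.y_sq (K := K) (ζ := ζ))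
  simpa [xS, yS, map_pow, map_add, map_sub, map_smul, map_one] using this

lemma hxr (n : ℕ) : xS K ζ ^ (n + 4) = xS K ζ ^ n := by
  rw [pow_add, hx4, mul_one]

lemma hyx : yS K ζ * xS K ζ = xS K ζ ^ 3 * yS K ζ := by
  have h : xS K ζ ^ 3 * (xS K ζ * yS K ζ) * xS K ζ = yS K ζ * xS K ζ := by
    rw [← mul_assoc, ← pow_succ, hx4, one_mul]
  rw [← h, hxyr]
  calc xS K ζ ^ 3 * (yS K ζ * xS K ζ ^ 3) * xS K ζ
      = xS K ζ ^ 3 * yS K ζ * (xS K ζ ^ 3 * xS K ζ) := by noncomm_ring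
    _ = xS K ζ ^ 3 * yS K ζ := by rw [← pow_succ, hx4, mul_one]

end Arel

section theta
variable {K : Type*} [Field K] (ι : K) (ζ : K) (hζ : ζ ^ 4 = 1)
    (θ : GG → GG → K)
    (hθr : ∀ g h h' : GG, θ g (h * h') = θ g h * θ g h')
    (hθl : ∀ g g' h : GG, θ (g * g') h = θ g h * θ g' h)
    (hθ22 : θ g2 g2 = ζ ^ 2) (hθ23 : θ g2 g3 = -1)
    (hθ32 : θ g3 g2 = -1) (hθ33 : θ g3 g3 = 1)

lemma g22 : g2 * g2 = g1 := by decide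
lemma g33 : g3 * g3 = g1 := by decide
lemma g23 : g2 * g3 = g4 := by decide
lemma g1_eq_one : g1 = (1 : GG) := by decide

include hζ hθr hθl hθ22 hθ23 hθ32 hθ33 in
lemma theta_tbl :
    θ g1 g1 = 1 ∧ θ g1 g2 = 1 ∧ θ g1 g3 = 1 ∧ θ g1 g4 = 1 ∧
    θ g2 g1 = 1 ∧ θ g2 g4 = -ζ^2 ∧
    θ g3 g1 = 1 ∧ θ g3 g4 = -1 ∧
    θ g4 g1 = 1 ∧ θ g4 g2 = -ζ^2 ∧ θ g4 g3 = -1 ∧ θ g4 g4 = ζ^2 := by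
  have h21 : θ g2 g1 = 1 := by
    rw [← g22, hθr, hθ22]; rw [← pow_add]; exact hζ
  have h31 : θ g3 g1 = 1 := by rw [← g33, hθr, hθ33]; ring
  have h24 : θ g2 g4 = -ζ^2 := by rw [← g23, hθr, hθ22, hθ23]; ring
  have h34 : θ g3 g4 = -1 := by rw [← g23, hθr, hθ32, hθ33]; ring
  have h12 : θ g1 g2 = 1 := by
    rw [← g22, hθl, hθ22, ← pow_add]; exact hζ
  have h13 : θ g1 g3 = 1 := by rw [← g22, hθl, hθ23]; ring
  have h11 : θ g1 g1 = 1 := by rw [← g22]; rw [hθl, g22, h21]; ring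
  have h14 : θ g1 g4 = 1 := by rw [← g22, hθl, h24]; linear_combination hζ
  have h41 : θ g4 g1 = 1 := by rw [← g23, hθl, h21, h31]; ring
  have h42 : θ g4 g2 = -ζ^2 := by rw [← g23, hθl, hθ22, hθ32]; ring
  have h43 : θ g4 g3 = -1 := by rw [← g23, hθl, hθ23, hθ33]; ring
  have h44 : θ g4 g4 = ζ^2 := by rw [← g23, hθl, g23, h24, h34]; ring
  exact ⟨h11, h12, h13, h14, h21, h24, h31, h34, h41, h42, h43, h44⟩

end theta

lemma sum_GG {N : Type*} [AddCommMonoid N] (f : GG → N) :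
    (∑ g : GG, f g) = f g1 + f g2 + f g3 + f g4 := by
  rw [show (Finset.univ : Finset GG) = {g1, g2, g3, g4} from by decide]
  rw [Finset.sum_insert (by decide), Finset.sum_insert (by decide),
    Finset.sum_insert (by decide), Finset.sum_singleton]
  abel

section tw
variable {K : Type*} [Field K] {B : Type*} [Ring B] [Algebra K B]
    (ρ : GG →* (B →ₐ[K] B)) (θ : GG → GG → K)

lemma twMul_tmul (a b a' b' : B) :
    twMul ρ θ (a ⊗ₜ[K] b) (a' ⊗ₜ[K] b') =
      (4 : K)⁻¹ • ∑ g : GG, ∑ g' : GG, θ g g' •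
        ((a * (ρ g a')) ⊗ₜ[K] ((ρ g' b) * b')) := by
  simp only [twMul, TensorProduct.map_tmul, TensorProduct.tensorTensorTensorComm_tmul,
    LinearMap.mul'_apply, LinearMap.id_coe, id_eq, AlgHom.toLinearMap_apply]

noncomputable def twF : ((B ⊗[K] B) ⊗[K] (B ⊗[K] B)) →ₗ[K] (B ⊗[K] B) :=
  (4 : K)⁻¹ • ∑ g : GG, ∑ g' : GG, θ g g' •
    ((TensorProduct.map (LinearMap.mul' K B) (LinearMap.mul' K B)) ∘ₗ
      (TensorProduct.tensorTensorTensorComm K B B B B).toLinearMap ∘ₗ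
      (TensorProduct.map
        (TensorProduct.map LinearMap.id (ρ g').toLinearMap)
        (TensorProduct.map (ρ g).toLinearMap LinearMap.id)))

lemma twMul_eq (z w : B ⊗[K] B) : twMul ρ θ z w = twF ρ θ (z ⊗ₜ[K] w) := by
  simp [twMul, twF, LinearMap.sum_apply]

lemma twMul_add_left (z z' w : B ⊗[K] B) :
    twMul ρ θ (z + z') w = twMul ρ θ z w + twMul ρ θ z' w := by
  simp [twMul_eq, add_tmul]

lemma twMul_add_right (z w w' : B ⊗[K] B) :
    twMul ρ θ z (w + w') = twMul ρ θ z w + twMul ρ θ z w' := by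
  simp [twMul_eq, tmul_add]

lemma twMul_smul_left (c : K) (z w : B ⊗[K] B) :
    twMul ρ θ (c • z) w = c • twMul ρ θ z w := by
  rw [twMul_eq, twMul_eq, ← smul_tmul', map_smul]

lemma twMul_smul_right (c : K) (z w : B ⊗[K] B) :
    twMul ρ θ z (c • w) = c • twMul ρ θ z w := by
  rw [twMul_eq, twMul_eq, tmul_smul, map_smul]

lemma twMul_sub_left (z z' w : B ⊗[K] B) :
    twMul ρ θ (z - z') w = twMul ρ θ z w - twMul ρ θ z' w := by
  simp [twMul_eq, sub_tmul]

lemma twMul_sub_right (z w w' : B ⊗[K] B) :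
    twMul ρ θ z (w - w') = twMul ρ θ z w - twMul ρ θ z w' := by
  simp [twMul_eq, tmul_sub]

variable (c : K)
variable (h4 : (4 : K) ≠ 0)
variable (hρ1 : ∀ b : B, ρ g1 b = b)
variable (t11 : θ g1 g1 = 1) (t12 : θ g1 g2 = 1) (t13 : θ g1 g3 = 1) (t14 : θ g1 g4 = 1)
variable (t21 : θ g2 g1 = 1) (t22 : θ g2 g2 = c) (t23 : θ g2 g3 = -1) (t24 : θ g2 g4 = -c)
variable (t31 : θ g3 g1 = 1) (t32 : θ g3 g2 = -1) (t33 : θ g3 g3 = 1) (t34 : θ g3 g4 = -1)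
variable (t41 : θ g4 g1 = 1) (t42 : θ g4 g2 = -c) (t43 : θ g4 g3 = -1) (t44 : θ g4 g4 = c)

include h4 hρ1 t11 t12 t13 t14 t21 t22 t23 t24 t31 t32 t33 t34 t41 t42 t43 t44 in
lemma tw1 (a b a' b' : B) (h3a : ρ g3 a' = a') (h4a : ρ g4 a' = ρ g2 a')
    (h3b : ρ g3 b = b) (h4b : ρ g4 b = ρ g2 b) :
    twMul ρ θ (a ⊗ₜ[K] b) (a' ⊗ₜ[K] b') = (a * a') ⊗ₜ[K] (b * b') := by
  rw [twMul_tmul]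
  simp only [sum_GG, hρ1, h3a, h4a, h3b, h4b,
    t11, t12, t13, t14, t21, t22, t23, t24, t31, t32, t33, t34, t41, t42, t43, t44]
  match_scalars <;> field_simp <;> norm_num

include h4 hρ1 t11 t12 t13 t14 t21 t22 t23 t24 t31 t32 t33 t34 t41 t42 t43 t44 in
lemma tw2 (a b Y Y2 Y3 Y4 : B) (hY2 : ρ g2 Y = Y2) (hY3 : ρ g3 Y = Y3) (hY4 : ρ g4 Y = Y4)
    (h3b : ρ g3 b = b) (h4b : ρ g4 b = ρ g2 b) :
    twMul ρ θ (a ⊗ₜ[K] b) (Y ⊗ₜ[K] Y) = (2 : K)⁻¹ •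
      ((a * Y) ⊗ₜ[K] (b * Y) + (a * Y) ⊗ₜ[K] ((ρ g2 b) * Y)
        + (a * Y3) ⊗ₜ[K] (b * Y) - (a * Y3) ⊗ₜ[K] ((ρ g2 b) * Y)) := by
  rw [twMul_tmul]
  simp only [sum_GG, hρ1, hY2, hY3, hY4, h3b, h4b,
    t11, t12, t13, t14, t21, t22, t23, t24, t31, t32, t33, t34, t41, t42, t43, t44]
  have h2 : (2 : K) ≠ 0 := by
    intro h; apply h4; have : (4:K) = 2 * 2 := by norm_num
    rw [this, h]; ring
  match_scalars <;> field_simp <;> norm_num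

end tw

abbrev MM (K : Type*) [Field K] : Type _ := (Fin 4 → K) × Matrix (Fin 2) (Fin 2) K

noncomputable def XV {K : Type*} [Field K] (i : K) : MM K :=
  (![1, 1, -1, -1], !![i, 0; 0, -i])

noncomputable def YV {K : Type*} [Field K] (i ζ : K) : MM K :=
  (![1, -1, i, -i], !![0, 1; ζ, 0])

section repsec
variable {K : Type*} [Field K] (i ζ : K) (hi2 : i ^ 2 = -1) (hζ : ζ ^ 4 = 1)

include hi2 in
lemma hXV2 : XV (K := K) i ^ 2 = (![1,1,1,1], !![-1,0;0,-1]) := by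
  rw [pow_two, XV, Prod.mk_mul_mk]
  refine Prod.ext ?_ ?_
  · funext j; fin_cases j <;> simp
  · rw [Matrix.mul_fin_two]
    ext a b
    fin_cases a <;> fin_cases b <;> simp <;> linear_combination hi2

include hi2 in
lemma hXV4 : XV (K := K) i ^ 4 = 1 := by
  have e : XV (K := K) i ^ 4 = XV i ^ 2 * XV i ^ 2 := by
    rw [← pow_add]
  rw [e, hXV2 i hi2, Prod.mk_mul_mk]
  refine Prod.ext ?_ ?_
  · funext j; fin_cases j <;> simp
  · rw [Matrix.mul_fin_two]
    ext a b
    fin_cases a <;> fin_cases b <;> simp [Matrix.one_apply]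

include hi2 in
lemma hXV3 : XV (K := K) i ^ 3 = (![1,1,-1,-1], !![-i,0;0,i]) := by
  rw [pow_succ, hXV2 i hi2, XV, Prod.mk_mul_mk]
  refine Prod.ext ?_ ?_
  · funext j; fin_cases j <;> simp
  · rw [Matrix.mul_fin_two]
    ext a b
    fin_cases a <;> fin_cases b <;> simp

include hi2 in
lemma hXYV : XV (K := K) i * YV i ζ = YV i ζ * XV i ^ 3 := by
  rw [hXV3 i hi2, XV, YV, Prod.mk_mul_mk, Prod.mk_mul_mk]
  refine Prod.ext ?_ ?_
  · funext j; fin_cases j <;> simp <;> ring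
  · rw [Matrix.mul_fin_two, Matrix.mul_fin_two]
    ext a b
    fin_cases a <;> fin_cases b <;> simp <;> ring

include hi2 in
lemma hYV2 (h2 : (2:K) ≠ 0) : YV (K := K) i ζ ^ 2 =
    (2 : K)⁻¹ • (ζ • (1 : MM K) + XV i - ζ • (XV i ^ 2) + XV i ^ 3) := by
  rw [pow_two, hXV2 i hi2, hXV3 i hi2, YV, XV, Prod.mk_mul_mk]
  refine Prod.ext ?_ ?_
  · funext j
    fin_cases j <;>
      simp [Prod.smul_fst, Prod.fst_add, Prod.fst_sub, Matrix.vecHead, Matrix.vecTail,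
        Pi.smul_apply, Pi.one_apply, smul_eq_mul] <;>
      field_simp <;> first | linear_combination (2:K) * hi2 | linear_combination (4:K) * hi2 | ring
  · rw [Matrix.mul_fin_two]
    ext a b
    fin_cases a <;> fin_cases b <;>
      simp [Matrix.one_apply, Matrix.smul_apply, Matrix.add_apply, Matrix.sub_apply,
        Prod.smul_snd, Prod.snd_add, Prod.snd_sub, smul_eq_mul] <;> field_simp <;> ring

include hi2 in
lemma rep_exists (h2 : (2:K) ≠ 0) :
    ∃ ψ : SecondAlg K ζ →ₐ[K] MM K, ψ (xS K ζ) = XV i ∧ ψ (yS K ζ) = YV i ζ := by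
  have hrel : ∀ ⦃a b : FreeAlgebra K (Fin 2)⦄, SecondRel K ζ a b →
      (FreeAlgebra.lift K ![XV (K := K) i, YV i ζ]) a
        = (FreeAlgebra.lift K ![XV (K := K) i, YV i ζ]) b := by
    intro a b h
    induction h with
    | x_pow_four => simpa [map_pow] using hXV4 i hi2
    | x_mul_y => simpa [map_mul, map_pow] using hXYV i ζ hi2
    | y_sq => simpa [map_pow, map_mul, map_add, map_sub, map_smul, map_one]
        using hYV2 i ζ hi2 h2
  refine ⟨RingQuot.liftAlgHom K ⟨FreeAlgebra.lift K ![XV (K := K) i, YV i ζ], hrel⟩, ?_, ?_⟩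
  · rw [xS, RingQuot.liftAlgHom_mkAlgHom_apply]; simp
  · rw [yS, RingQuot.liftAlgHom_mkAlgHom_apply]; simp

end repsec


/-- `ω₁ := 1`. -/
noncomputable def w1S (K : Type*) [Field K] (ζ : K) : SecondAlg K ζ := 1

/-- `ω₂ := (1/2)(1 + ιζ²)x + (1/2)(1 - ιζ²)x³`. -/
noncomputable def w2S (K : Type*) [Field K] (i ζ : K) : SecondAlg K ζ :=
  ((2 : K)⁻¹ * (1 + i * ζ ^ 2)) • xS K ζ +
    ((2 : K)⁻¹ * (1 - i * ζ ^ 2)) • (xS K ζ ^ 3)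

/-- `ω₃ := (1/2)(1 - ιζ²)x + (1/2)(1 + ιζ²)x³`. -/
noncomputable def w3S (K : Type*) [Field K] (i ζ : K) : SecondAlg K ζ :=
  ((2 : K)⁻¹ * (1 - i * ζ ^ 2)) • xS K ζ +
    ((2 : K)⁻¹ * (1 + i * ζ ^ 2)) • (xS K ζ ^ 3)

/-- `ω₄ := x²`. -/
noncomputable def w4S (K : Type*) [Field K] (ζ : K) : SecondAlg K ζ := xS K ζ ^ 2

/-- `η₁ := y`. -/
noncomputable def e1S (K : Type*) [Field K] (ζ : K) : SecondAlg K ζ := yS K ζ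

/-- `η₂ := x³y`. -/
noncomputable def e2S (K : Type*) [Field K] (ζ : K) : SecondAlg K ζ := xS K ζ ^ 3 * yS K ζ

/-- `η₃ := x²y`. -/
noncomputable def e3S (K : Type*) [Field K] (ζ : K) : SecondAlg K ζ := xS K ζ ^ 2 * yS K ζ

/-- `η₄ := xy`. -/
noncomputable def e4S (K : Type*) [Field K] (ζ : K) : SecondAlg K ζ := xS K ζ * yS K ζ

lemma lin_ind {K : Type*} [Field K] (i ζ : K) (hi2 : i ^ 2 = -1) (h2 : (2:K) ≠ 0)
    (hi0 : i ≠ 0) (hζ0 : ζ ≠ 0) :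
    LinearIndependent K ![w1S K ζ, w2S K i ζ, w3S K i ζ, w4S K ζ,
      e1S K ζ, e2S K ζ, e3S K ζ, e4S K ζ] := by
  obtain ⟨ψ, hx, hy⟩ := rep_exists i ζ hi2 h2
  apply LinearIndependent.of_comp ψ.toLinearMap
  have hψ0 : ψ (w1S K ζ) = ((![1,1,1,1], !![1,0;0,1]) : MM K) := by
    rw [w1S, map_one]
    refine Prod.ext ?_ ?_
    · funext j; fin_cases j <;> simp
    · ext a b; fin_cases a <;> fin_cases b <;> simp [Matrix.one_apply]
  have hψ1 : ψ (w2S K i ζ) = ((![1,1,-1,-1], !![-ζ^2,0;0,ζ^2]) : MM K) := by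
    rw [w2S, map_add, map_smul, map_smul, map_pow, hx, hXV3 i hi2, XV, Prod.smul_mk,
      Prod.smul_mk, Prod.mk_add_mk]
    refine Prod.ext ?_ ?_
    · funext j
      fin_cases j <;> simp [smul_eq_mul] <;> field_simp <;> ring
    · ext a b
      fin_cases a <;> fin_cases b <;>
        simp [Matrix.smul_apply, Matrix.add_apply, smul_eq_mul] <;> field_simp <;>
        first
          | linear_combination (ζ^2 : K) * hi2 | linear_combination (2*ζ^2 : K) * hi2
          | linear_combination (-ζ^2 : K) * hi2 | linear_combination (-2*ζ^2 : K) * hi2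
          | linear_combination (4*ζ^2 : K) * hi2 | linear_combination (-4*ζ^2 : K) * hi2
          | ring
  have hψ2 : ψ (w3S K i ζ) = ((![1,1,-1,-1], !![ζ^2,0;0,-ζ^2]) : MM K) := by
    rw [w3S, map_add, map_smul, map_smul, map_pow, hx, hXV3 i hi2, XV, Prod.smul_mk,
      Prod.smul_mk, Prod.mk_add_mk]
    refine Prod.ext ?_ ?_
    · funext j
      fin_cases j <;> simp [smul_eq_mul] <;> field_simp <;> ring
    · ext a b
      fin_cases a <;> fin_cases b <;>
        simp [Matrix.smul_apply, Matrix.add_apply, smul_eq_mul] <;> field_simp <;>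
        first
          | linear_combination (ζ^2 : K) * hi2 | linear_combination (2*ζ^2 : K) * hi2
          | linear_combination (-ζ^2 : K) * hi2 | linear_combination (-2*ζ^2 : K) * hi2
          | linear_combination (4*ζ^2 : K) * hi2 | linear_combination (-4*ζ^2 : K) * hi2
          | ring
  have hψ3 : ψ (w4S K ζ) = ((![1,1,1,1], !![-1,0;0,-1]) : MM K) := by
    rw [w4S, map_pow, hx, hXV2 i hi2]
  have hψ4 : ψ (e1S K ζ) = ((![1,-1,i,-i], !![0,1;ζ,0]) : MM K) := by
    rw [e1S, hy, YV]
  have hψ5 : ψ (e2S K ζ) = ((![1,-1,-i,i], !![0,-i;i*ζ,0]) : MM K) := by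
    rw [e2S, map_mul, map_pow, hx, hy, hXV3 i hi2, YV, Prod.mk_mul_mk]
    refine Prod.ext ?_ ?_
    · funext j; fin_cases j <;> simp <;> ring
    · rw [Matrix.mul_fin_two]
      ext a b; fin_cases a <;> fin_cases b <;> simp <;> ring
  have hψ6 : ψ (e3S K ζ) = ((![1,-1,i,-i], !![0,-1;-ζ,0]) : MM K) := by
    rw [e3S, map_mul, map_pow, hx, hy, hXV2 i hi2, YV, Prod.mk_mul_mk]
    refine Prod.ext ?_ ?_
    · funext j; fin_cases j <;> simp <;> ring
    · rw [Matrix.mul_fin_two]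
      ext a b; fin_cases a <;> fin_cases b <;> simp <;> ring
  have hψ7 : ψ (e4S K ζ) = ((![1,-1,-i,i], !![0,i;-(i*ζ),0]) : MM K) := by
    rw [e4S, map_mul, hx, hy, XV, YV, Prod.mk_mul_mk]
    refine Prod.ext ?_ ?_
    · funext j; fin_cases j <;> simp <;> ring
    · rw [Matrix.mul_fin_two]
      ext a b; fin_cases a <;> fin_cases b <;> simp <;> ring
  rw [Fintype.linearIndependent_iff]
  intro c hc
  rw [Fin.sum_univ_eight] at hc
  simp only [Function.comp_apply, Matrix.cons_val_zero, Matrix.cons_val_one,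
    Matrix.head_cons, Matrix.cons_val_two, Matrix.tail_cons, Matrix.cons_val_three,
    Matrix.cons_val_four, Matrix.cons_val_succ, AlgHom.toLinearMap_apply] at hc
  rw [show (![w1S K ζ, w2S K i ζ, w3S K i ζ, w4S K ζ, e1S K ζ, e2S K ζ, e3S K ζ, e4S K ζ])
        (5 : Fin 8) = e2S K ζ from rfl,
      show (![w1S K ζ, w2S K i ζ, w3S K i ζ, w4S K ζ, e1S K ζ, e2S K ζ, e3S K ζ, e4S K ζ])
        (6 : Fin 8) = e3S K ζ from rfl,
      show (![w1S K ζ, w2S K i ζ, w3S K i ζ, w4S K ζ, e1S K ζ, e2S K ζ, e3S K ζ, e4S K ζ])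
        (7 : Fin 8) = e4S K ζ from rfl] at hc
  rw [hψ0, hψ1, hψ2, hψ3, hψ4, hψ5, hψ6, hψ7] at hc
  simp only [Prod.smul_mk, Prod.mk_add_mk, Prod.mk_eq_zero] at hc
  obtain ⟨hf, hm⟩ := hc
  have F0 := congrFun hf 0
  have F1 := congrFun hf 1
  have F2 := congrFun hf 2
  have F3 := congrFun hf 3
  have M00 := congrFun (congrFun hm 0) 0
  have M01 := congrFun (congrFun hm 0) 1
  have M10 := congrFun (congrFun hm 1) 0
  have M11 := congrFun (congrFun hm 1) 1
  simp only [Pi.add_apply, Pi.smul_apply, Matrix.cons_val_zero, Matrix.cons_val_one,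
    Matrix.head_cons, Matrix.cons_val_two, Matrix.tail_cons, Matrix.cons_val_three,
    smul_eq_mul, Pi.zero_apply, Matrix.add_apply, Matrix.smul_apply, Matrix.of_apply,
    Matrix.cons_val', Matrix.empty_val', Matrix.cons_val_fin_one, Matrix.vecHead, Matrix.vecTail, Matrix.cons_val_succ, Function.comp_apply,
    Matrix.zero_apply, mul_one, mul_neg, mul_zero, add_zero, zero_add] at F0 F1 F2 F3 M00 M01 M10 M11
  have a1 : c 4 + c 5 + c 6 + c 7 = 0 := mul_left_cancel₀ h2
    (show (2:K) * (c 4 + c 5 + c 6 + c 7) = 2 * 0 by linear_combination F0 - F1)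
  have a2 : c 0 + c 1 + c 2 + c 3 = 0 := mul_left_cancel₀ h2
    (show (2:K) * (c 0 + c 1 + c 2 + c 3) = 2 * 0 by linear_combination F0 + F1)
  have a3 : c 4 - c 5 + c 6 - c 7 = 0 := mul_left_cancel₀ (mul_ne_zero h2 hi0)
    (show (2*i:K) * (c 4 - c 5 + c 6 - c 7) = 2*i * 0 by linear_combination F2 - F3)
  have a4 : c 0 - c 1 - c 2 + c 3 = 0 := mul_left_cancel₀ h2
    (show (2:K) * (c 0 - c 1 - c 2 + c 3) = 2 * 0 by linear_combination F2 + F3)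
  have a5 : c 4 + i * c 5 - c 6 - i * c 7 = 0 := mul_left_cancel₀ hζ0
    (show ζ * (c 4 + i * c 5 - c 6 - i * c 7) = ζ * 0 by linear_combination M10)
  have a6 : c 4 - c 6 = 0 := mul_left_cancel₀ h2
    (show (2:K) * (c 4 - c 6) = 2 * 0 by linear_combination M01 + a5)
  have a7 : c 5 - c 7 = 0 := mul_left_cancel₀ (mul_ne_zero h2 hi0)
    (show (2*i:K) * (c 5 - c 7) = 2*i * 0 by linear_combination a5 - M01)
  have a8 : c 4 + c 6 = 0 := mul_left_cancel₀ h2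
    (show (2:K) * (c 4 + c 6) = 2 * 0 by linear_combination a1 + a3)
  have a9 : c 5 + c 7 = 0 := mul_left_cancel₀ h2
    (show (2:K) * (c 5 + c 7) = 2 * 0 by linear_combination a1 - a3)
  have a10 : c 0 + c 3 = 0 := mul_left_cancel₀ h2
    (show (2:K) * (c 0 + c 3) = 2 * 0 by linear_combination a2 + a4)
  have a11 : c 1 + c 2 = 0 := mul_left_cancel₀ h2
    (show (2:K) * (c 1 + c 2) = 2 * 0 by linear_combination a2 - a4)
  have a12 : c 0 - c 3 = 0 := mul_left_cancel₀ h2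
    (show (2:K) * (c 0 - c 3) = 2 * 0 by linear_combination M00 + M11)
  have a13 : c 1 - c 2 = 0 := mul_left_cancel₀ (mul_ne_zero h2 (pow_ne_zero 2 hζ0))
    (show (2*ζ^2:K) * (c 1 - c 2) = 2*ζ^2 * 0 by linear_combination M11 - M00)
  have hC0 : c 0 = 0 := mul_left_cancel₀ h2
    (show (2:K) * c 0 = 2 * 0 by linear_combination a10 + a12)
  have hC1 : c 1 = 0 := mul_left_cancel₀ h2
    (show (2:K) * c 1 = 2 * 0 by linear_combination a11 + a13)
  have hC2 : c 2 = 0 := mul_left_cancel₀ h2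
    (show (2:K) * c 2 = 2 * 0 by linear_combination a11 - a13)
  have hC3 : c 3 = 0 := mul_left_cancel₀ h2
    (show (2:K) * c 3 = 2 * 0 by linear_combination a10 - a12)
  have hC4 : c 4 = 0 := mul_left_cancel₀ h2
    (show (2:K) * c 4 = 2 * 0 by linear_combination a6 + a8)
  have hC5 : c 5 = 0 := mul_left_cancel₀ h2
    (show (2:K) * c 5 = 2 * 0 by linear_combination a7 + a9)
  have hC6 : c 6 = 0 := mul_left_cancel₀ h2
    (show (2:K) * c 6 = 2 * 0 by linear_combination a8 - a6)
  have hC7 : c 7 = 0 := mul_left_cancel₀ h2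
    (show (2:K) * c 7 = 2 * 0 by linear_combination a9 - a7)
  intro j
  fin_cases j <;> assumption


section spanning
variable {K : Type*} [Field K] {ζ : K}

lemma span_top (i : K) (hi2 : i ^ 2 = -1) (hζ4 : ζ ^ 4 = 1) (h2 : (2:K) ≠ 0) :
    Submodule.span K (Set.range ![w1S K ζ, w2S K i ζ, w3S K i ζ, w4S K ζ,
      e1S K ζ, e2S K ζ, e3S K ζ, e4S K ζ]) = ⊤ := by
  set x : SecondAlg K ζ := xS K ζ with hxd
  set y : SecondAlg K ζ := yS K ζ with hyd
  have hx4 : x ^ 4 = 1 := hx4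
  have hyx : y * x = x ^ 3 * y := hyx
  have hy2 : y ^ 2 = (2 : K)⁻¹ • (ζ • (1 : SecondAlg K ζ) + x - ζ • (x ^ 2) + x ^ 3) := hy2
  have hx5 : x ^ 5 = x := by rw [show (5:ℕ) = 1+4 from rfl, hxr 1, pow_one]
  have hx6 : x ^ 6 = x ^ 2 := by rw [show (6:ℕ) = 2+4 from rfl, hxr 2]
  have exx : x * x = x ^ 2 := (pow_two x).symm
  have ex2 : x * x ^ 2 = x ^ 3 := by rw [← pow_succ']
  have ex3 : x * x ^ 3 = 1 := by rw [← pow_succ', hx4]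
  have e2x : x ^ 2 * x = x ^ 3 := by rw [← pow_succ]
  have e3x : x ^ 3 * x = 1 := by rw [← pow_succ, hx4]
  have e22 : x ^ 2 * x ^ 2 = 1 := by rw [← pow_add]; exact hx4
  have e23 : x ^ 2 * x ^ 3 = x := by rw [← pow_add]; exact hx5
  have e32 : x ^ 3 * x ^ 2 = x := by rw [← pow_add]; exact hx5
  have e33 : x ^ 3 * x ^ 3 = x ^ 2 := by rw [← pow_add]; exact hx6
  have eyy : y * y = y ^ 2 := (pow_two y).symm
  set T : Submodule K (SecondAlg K ζ) :=
    Submodule.span K ({1, x, x^2, x^3, y, x*y, x^2*y, x^3*y} : Set (SecondAlg K ζ)) with hTd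
  have hg : ∀ a ∈ ({1, x, x^2, x^3, y, x*y, x^2*y, x^3*y} : Set (SecondAlg K ζ)), a ∈ T :=
    fun a ha => Submodule.subset_span ha
  have hg1 : (1 : SecondAlg K ζ) ∈ T := hg _ (by simp)
  have hgx : x ∈ T := hg _ (by simp)
  have hgx2 : x^2 ∈ T := hg _ (by simp)
  have hgx3 : x^3 ∈ T := hg _ (by simp)
  have hgy : y ∈ T := hg _ (by simp)
  have hgxy : x*y ∈ T := hg _ (by simp)
  have hgx2y : x^2*y ∈ T := hg _ (by simp)
  have hgx3y : x^3*y ∈ T := hg _ (by simp)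
  -- y^2 and its x-multiples
  have hy2T : y * y ∈ T := by
    rw [eyy, hy2]
    exact Submodule.smul_mem _ _ (Submodule.add_mem _ (Submodule.sub_mem _
      (Submodule.add_mem _ (Submodule.smul_mem _ _ hg1) hgx) (Submodule.smul_mem _ _ hgx2)) hgx3)
  have hxy2T : (x*y) * y ∈ T := by
    rw [mul_assoc, eyy, hy2, mul_smul_comm]
    refine Submodule.smul_mem _ _ ?_
    rw [mul_add, mul_sub, mul_add, mul_smul_comm, mul_one, mul_smul_comm, exx, ex2, ex3]
    exact Submodule.add_mem _ (Submodule.sub_mem _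
      (Submodule.add_mem _ (Submodule.smul_mem _ _ hgx) hgx2) (Submodule.smul_mem _ _ hgx3)) hg1
  have hx2y2T : (x^2*y) * y ∈ T := by
    rw [mul_assoc, eyy, hy2, mul_smul_comm]
    refine Submodule.smul_mem _ _ ?_
    rw [mul_add, mul_sub, mul_add, mul_smul_comm, mul_one, mul_smul_comm, e2x, e22, e23]
    exact Submodule.add_mem _ (Submodule.sub_mem _
      (Submodule.add_mem _ (Submodule.smul_mem _ _ hgx2) hgx3) (Submodule.smul_mem _ _ hg1)) hgx
  have hx3y2T : (x^3*y) * y ∈ T := by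
    rw [mul_assoc, eyy, hy2, mul_smul_comm]
    refine Submodule.smul_mem _ _ ?_
    rw [mul_add, mul_sub, mul_add, mul_smul_comm, mul_one, mul_smul_comm, e3x, e32, e33]
    exact Submodule.add_mem _ (Submodule.sub_mem _
      (Submodule.add_mem _ (Submodule.smul_mem _ _ hgx3) hg1) (Submodule.smul_mem _ _ hgx)) hgx2
  have hmulx : ∀ a ∈ T, a * x ∈ T := by
    intro a ha
    induction ha using Submodule.span_induction with
    | mem a h =>
      simp only [Set.mem_insert_iff, Set.mem_singleton_iff] at h
      rcases h with rfl|rfl|rfl|rfl|rfl|rfl|rfl|rfl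
      · rw [one_mul]; exact hgx
      · rw [exx]; exact hgx2
      · rw [e2x]; exact hgx3
      · rw [e3x]; exact hg1
      · rw [hyx]; exact hgx3y
      · rw [mul_assoc, hyx, ← mul_assoc, ex3, one_mul]; exact hgy
      · rw [mul_assoc, hyx, ← mul_assoc, e23]; exact hgxy
      · rw [mul_assoc, hyx, ← mul_assoc, e33]; exact hgx2y
    | zero => rw [zero_mul]; exact Submodule.zero_mem _
    | add a b _ _ pa pb => rw [add_mul]; exact Submodule.add_mem _ pa pb
    | smul r a _ pa => rw [smul_mul_assoc]; exact Submodule.smul_mem _ _ pa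
  have hmuly : ∀ a ∈ T, a * y ∈ T := by
    intro a ha
    induction ha using Submodule.span_induction with
    | mem a h =>
      simp only [Set.mem_insert_iff, Set.mem_singleton_iff] at h
      rcases h with rfl|rfl|rfl|rfl|rfl|rfl|rfl|rfl
      · rw [one_mul]; exact hgy
      · exact hgxy
      · exact hgx2y
      · exact hgx3y
      · exact hy2T
      · exact hxy2T
      · exact hx2y2T
      · exact hx3y2T
    | zero => rw [zero_mul]; exact Submodule.zero_mem _
    | add a b _ _ pa pb => rw [add_mul]; exact Submodule.add_mem _ pa pb
    | smul r a _ pa => rw [smul_mul_assoc]; exact Submodule.smul_mem _ _ pa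
  have hmulT : ∀ a ∈ T, ∀ b ∈ T, a * b ∈ T := by
    intro a ha b hb
    induction hb using Submodule.span_induction with
    | mem b h =>
      simp only [Set.mem_insert_iff, Set.mem_singleton_iff] at h
      rcases h with rfl|rfl|rfl|rfl|rfl|rfl|rfl|rfl
      · rw [mul_one]; exact ha
      · exact hmulx a ha
      · rw [show a * x^2 = a * x * x by rw [mul_assoc, exx]]
        exact hmulx _ (hmulx a ha)
      · rw [show a * x^3 = a * x * x * x by noncomm_ring]
        exact hmulx _ (hmulx _ (hmulx a ha))
      · exact hmuly a ha
      · rw [← mul_assoc]; exact hmuly _ (hmulx a ha)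
      · rw [show a * (x^2*y) = a * x * x * y by noncomm_ring]
        exact hmuly _ (hmulx _ (hmulx a ha))
      · rw [show a * (x^3*y) = a * x * x * x * y by noncomm_ring]
        exact hmuly _ (hmulx _ (hmulx _ (hmulx a ha)))
    | zero => rw [mul_zero]; exact Submodule.zero_mem _
    | add b b' _ _ pb pb' => rw [mul_add]; exact Submodule.add_mem _ pb pb'
    | smul r b _ pb => rw [mul_smul_comm]; exact Submodule.smul_mem _ _ pb
  have htop : ∀ a : SecondAlg K ζ, a ∈ T := by
    intro a
    obtain ⟨p, rfl⟩ := RingQuot.mkAlgHom_surjective K (SecondRel K ζ) a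
    induction p using FreeAlgebra.induction with
    | grade0 r =>
      rw [AlgHom.commutes]
      rw [Algebra.algebraMap_eq_smul_one]
      exact Submodule.smul_mem _ _ hg1
    | grade1 j =>
      fin_cases j
      · exact hgx
      · exact hgy
    | add p q hp hq => rw [map_add]; exact Submodule.add_mem _ hp hq
    | mul p q hp hq => rw [map_mul]; exact hmulT _ hp _ hq
  -- now relate T to the span of the v's
  set S := Submodule.span K (Set.range ![w1S K ζ, w2S K i ζ, w3S K i ζ, w4S K ζ,
      e1S K ζ, e2S K ζ, e3S K ζ, e4S K ζ]) with hSd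
  have hs0 : w1S K ζ ∈ S := Submodule.subset_span ⟨0, rfl⟩
  have hs1 : w2S K i ζ ∈ S := Submodule.subset_span ⟨1, rfl⟩
  have hs2 : w3S K i ζ ∈ S := Submodule.subset_span ⟨2, rfl⟩
  have hs3 : w4S K ζ ∈ S := Submodule.subset_span ⟨3, rfl⟩
  have hs4 : e1S K ζ ∈ S := Submodule.subset_span ⟨4, rfl⟩
  have hs5 : e2S K ζ ∈ S := Submodule.subset_span ⟨5, rfl⟩
  have hs6 : e3S K ζ ∈ S := Submodule.subset_span ⟨6, rfl⟩
  have hs7 : e4S K ζ ∈ S := Submodule.subset_span ⟨7, rfl⟩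
  have hxS : x ∈ S := by
    have e : x = ((2:K)⁻¹*(1 - i*ζ^2)) • (w2S K i ζ) + ((2:K)⁻¹*(1 + i*ζ^2)) • (w3S K i ζ) := by
      rw [w2S, w3S, ← hxd]
      match_scalars <;> field_simp <;>
        first
          | linear_combination (2*ζ^4 : K) * hi2 - (2:K) * hζ4
          | linear_combination (-2*ζ^4 : K) * hi2 + (2:K) * hζ4
          | ring
    rw [e]
    exact Submodule.add_mem _ (Submodule.smul_mem _ _ hs1) (Submodule.smul_mem _ _ hs2)
  have hx3S : x^3 ∈ S := by
    have e : x^3 = ((2:K)⁻¹*(1 + i*ζ^2)) • (w2S K i ζ) + ((2:K)⁻¹*(1 - i*ζ^2)) • (w3S K i ζ) := by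
      rw [w2S, w3S, ← hxd]
      match_scalars <;> field_simp <;>
        first
          | linear_combination (2*ζ^4 : K) * hi2 - (2:K) * hζ4
          | linear_combination (-2*ζ^4 : K) * hi2 + (2:K) * hζ4
          | ring
    rw [e]
    exact Submodule.add_mem _ (Submodule.smul_mem _ _ hs1) (Submodule.smul_mem _ _ hs2)
  have hTS : T ≤ S := by
    rw [hTd]
    refine Submodule.span_le.2 ?_
    rintro a (rfl|rfl|rfl|rfl|rfl|rfl|rfl|rfl)
    · simpa [w1S] using hs0
    · exact hxS
    · simpa [w4S] using hs3
    · exact hx3S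
    · simpa [e1S] using hs4
    · simpa [e4S] using hs7
    · simpa [e3S] using hs6
    · simpa [e2S] using hs5
  rw [eq_top_iff]
  intro a _
  exact hTS (htop a)

end spanning

set_option maxHeartbeats 2000000 in
theorem stmt_14 {K : Type*} [Field K] (ι : K) (hι : IsPrimitiveRoot ι 4)
    (ζ : K) (hζ : ζ ^ 4 = 1)
    (ρ : GG →* (SecondAlg K ζ →ₐ[K] SecondAlg K ζ))
    (hρ2x : ρ g2 (xS K ζ) = xS K ζ ^ 3) (hρ2y : ρ g2 (yS K ζ) = xS K ζ ^ 3 * yS K ζ)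
    (hρ3x : ρ g3 (xS K ζ) = xS K ζ) (hρ3y : ρ g3 (yS K ζ) = xS K ζ ^ 2 * yS K ζ)
    (θ : GG → GG → K)
    (hθr : ∀ g h h' : GG, θ g (h * h') = θ g h * θ g h')
    (hθl : ∀ g g' h : GG, θ (g * g') h = θ g h * θ g' h)
    (hθ22 : θ g2 g2 = ζ ^ 2) (hθ23 : θ g2 g3 = -1)
    (hθ32 : θ g3 g2 = -1) (hθ33 : θ g3 g3 = 1)
    -- the coproduct `Δ : A → A ⊗̂ A`
    (Δ : SecondAlg K ζ →ₗ[K] SecondAlg K ζ ⊗[K] SecondAlg K ζ)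
    (hΔ1 : Δ 1 = (1 : SecondAlg K ζ) ⊗ₜ[K] (1 : SecondAlg K ζ))
    (hΔm : ∀ a b : SecondAlg K ζ, Δ (a * b) = twMul ρ θ (Δ a) (Δ b))
    (hΔx : Δ (xS K ζ) = (2 : K)⁻¹ •
      ((xS K ζ) ⊗ₜ[K] (xS K ζ) + (xS K ζ) ⊗ₜ[K] (xS K ζ ^ 3) +
        (xS K ζ ^ 3) ⊗ₜ[K] (xS K ζ) - (xS K ζ ^ 3) ⊗ₜ[K] (xS K ζ ^ 3)))
    (hΔy : Δ (yS K ζ) = (yS K ζ) ⊗ₜ[K] (yS K ζ))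
    -- the counit `ε : A → K` with `ε(x) = ε(y) = 1`
    (ε : SecondAlg K ζ →ₐ[K] K)
    (hεx : ε (xS K ζ) = 1) (hεy : ε (yS K ζ) = 1)
    (v : Fin 8 → SecondAlg K ζ)
    (hv : v = ![w1S K ζ, w2S K ι ζ, w3S K ι ζ, w4S K ζ,
        e1S K ζ, e2S K ζ, e3S K ζ, e4S K ζ]) :
    LinearIndependent K v ∧ Submodule.span K (Set.range v) = ⊤ ∧
      ∀ i : Fin 8, Δ (v i) = (v i) ⊗ₜ[K] (v i) ∧ ε (v i) = 1 := by
  subst hv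
  -- numeric facts
  have hi4 : ι ^ 4 = 1 := hι.pow_eq_one
  have hi21 : ι ^ 2 ≠ 1 := hι.pow_ne_one_of_pos_of_lt (by norm_num) (by norm_num)
  have hi2 : ι ^ 2 = -1 := by
    rcases mul_eq_zero.1 (show (ι^2 - 1) * (ι^2 + 1) = 0 by linear_combination hi4) with h | h
    · exact absurd (by linear_combination h) hi21
    · linear_combination h
  have h2 : (2:K) ≠ 0 := by
    intro h; exact hi21 (by rw [hi2]; linear_combination -h)
  have h4 : (4:K) ≠ 0 := by
    intro h
    have h22 : (2:K) * 2 = 0 := by linear_combination h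
    rcases mul_eq_zero.1 h22 with h' | h' <;> exact h2 h'
  have hι0 : ι ≠ 0 := hι.ne_zero (by norm_num)
  have hζ0 : ζ ≠ 0 := by
    intro h; rw [h] at hζ; simp at hζ
  refine ⟨lin_ind ι ζ hi2 h2 hι0 hζ0, span_top ι hi2 hζ h2, ?_⟩
  -- θ table
  obtain ⟨t11, t12, t13, t14, t21, t24, t31, t34, t41, t42, t43, t44⟩ :=
    theta_tbl ζ hζ θ hθr hθl hθ22 hθ23 hθ32 hθ33
  set x : SecondAlg K ζ := xS K ζ with hxd
  set y : SecondAlg K ζ := yS K ζ with hyd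
  have hx4 : x ^ 4 = 1 := hx4
  have hyx : y * x = x ^ 3 * y := hyx
  have hx5 : x ^ 5 = x := by rw [show (5:ℕ) = 1+4 from rfl, hxr 1, pow_one]
  have hx6 : x ^ 6 = x ^ 2 := by rw [show (6:ℕ) = 2+4 from rfl, hxr 2]
  have hx9 : x ^ 9 = x := by rw [show (9:ℕ) = 5+4 from rfl, hxr 5]; exact hx5
  have exx : x * x = x ^ 2 := (pow_two x).symm
  have ex3 : x * x ^ 3 = 1 := by rw [← pow_succ', hx4]
  have e2x : x ^ 2 * x = x ^ 3 := by rw [← pow_succ]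
  have e3x : x ^ 3 * x = 1 := by rw [← pow_succ, hx4]
  have e23 : x ^ 2 * x ^ 3 = x := by rw [← pow_add]; exact hx5
  have e33 : x ^ 3 * x ^ 3 = x ^ 2 := by rw [← pow_add]; exact hx6
  -- ρ facts
  have hρ1 : ∀ a : SecondAlg K ζ, ρ g1 a = a := by
    intro a; rw [g1_eq_one, map_one]; rfl
  have hρ4x : ρ g4 x = x ^ 3 := by
    rw [← g23, map_mul, AlgHom.mul_apply, hρ3x, hρ2x]
  have hρ2x2 : ρ g2 (x^2) = x^2 := by rw [map_pow, hρ2x, ← pow_mul]; exact hx6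
  have hρ2x3 : ρ g2 (x^3) = x := by rw [map_pow, hρ2x, ← pow_mul]; exact hx9
  have hρ3x2 : ρ g3 (x^2) = x^2 := by rw [map_pow, hρ3x]
  have hρ3x3 : ρ g3 (x^3) = x^3 := by rw [map_pow, hρ3x]
  have hρ4x2 : ρ g4 (x^2) = x^2 := by rw [map_pow, hρ4x, ← pow_mul]; exact hx6
  have hρ4x3 : ρ g4 (x^3) = x := by rw [map_pow, hρ4x, ← pow_mul]; exact hx9
  have hρ4y : ρ g4 y = x * y := by
    rw [← g23, map_mul, AlgHom.mul_apply, hρ3y, map_mul, hρ2x2, hρ2y,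
      ← mul_assoc, ← pow_add, show (2+3:ℕ) = 5 from rfl, hx5]
  have h3x : ρ g3 x = x := hρ3x
  have h4x : ρ g4 x = ρ g2 x := by rw [hρ4x, hρ2x]
  have h3x2 : ρ g3 (x^2) = x^2 := hρ3x2
  have h4x2 : ρ g4 (x^2) = ρ g2 (x^2) := by rw [hρ4x2, hρ2x2]
  have h3x3 : ρ g3 (x^3) = x^3 := hρ3x3
  have h4x3 : ρ g4 (x^3) = ρ g2 (x^3) := by rw [hρ4x3, hρ2x3]
  -- master lemma instances
  have E11 : ∀ a b' : SecondAlg K ζ,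
      twMul ρ θ (a ⊗ₜ[K] x) (x ⊗ₜ[K] b') = (a * x) ⊗ₜ[K] (x * b') := fun a b' =>
    tw1 ρ θ (ζ^2) h4 hρ1 t11 t12 t13 t14 t21 hθ22 hθ23 t24 t31 hθ32 hθ33 t34 t41 t42 t43 t44
      a x x b' h3x h4x h3x h4x
  have E13 : ∀ a b' : SecondAlg K ζ,
      twMul ρ θ (a ⊗ₜ[K] x) ((x^3) ⊗ₜ[K] b') = (a * x^3) ⊗ₜ[K] (x * b') := fun a b' =>
    tw1 ρ θ (ζ^2) h4 hρ1 t11 t12 t13 t14 t21 hθ22 hθ23 t24 t31 hθ32 hθ33 t34 t41 t42 t43 t44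
      a x (x^3) b' h3x3 h4x3 h3x h4x
  have E31 : ∀ a b' : SecondAlg K ζ,
      twMul ρ θ (a ⊗ₜ[K] (x^3)) (x ⊗ₜ[K] b') = (a * x) ⊗ₜ[K] (x^3 * b') := fun a b' =>
    tw1 ρ θ (ζ^2) h4 hρ1 t11 t12 t13 t14 t21 hθ22 hθ23 t24 t31 hθ32 hθ33 t34 t41 t42 t43 t44
      a (x^3) x b' h3x h4x h3x3 h4x3
  have E33 : ∀ a b' : SecondAlg K ζ,
      twMul ρ θ (a ⊗ₜ[K] (x^3)) ((x^3) ⊗ₜ[K] b') = (a * x^3) ⊗ₜ[K] (x^3 * b') := fun a b' =>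
    tw1 ρ θ (ζ^2) h4 hρ1 t11 t12 t13 t14 t21 hθ22 hθ23 t24 t31 hθ32 hθ33 t34 t41 t42 t43 t44
      a (x^3) (x^3) b' h3x3 h4x3 h3x3 h4x3
  have E21 : ∀ a b' : SecondAlg K ζ,
      twMul ρ θ (a ⊗ₜ[K] (x^2)) (x ⊗ₜ[K] b') = (a * x) ⊗ₜ[K] (x^2 * b') := fun a b' =>
    tw1 ρ θ (ζ^2) h4 hρ1 t11 t12 t13 t14 t21 hθ22 hθ23 t24 t31 hθ32 hθ33 t34 t41 t42 t43 t44
      a (x^2) x b' h3x h4x h3x2 h4x2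
  have E23 : ∀ a b' : SecondAlg K ζ,
      twMul ρ θ (a ⊗ₜ[K] (x^2)) ((x^3) ⊗ₜ[K] b') = (a * x^3) ⊗ₜ[K] (x^2 * b') := fun a b' =>
    tw1 ρ θ (ζ^2) h4 hρ1 t11 t12 t13 t14 t21 hθ22 hθ23 t24 t31 hθ32 hθ33 t34 t41 t42 t43 t44
      a (x^2) (x^3) b' h3x3 h4x3 h3x2 h4x2
  have F1 : ∀ a : SecondAlg K ζ,
      twMul ρ θ (a ⊗ₜ[K] x) (y ⊗ₜ[K] y) = (2:K)⁻¹ •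
        ((a * y) ⊗ₜ[K] (x * y) + (a * y) ⊗ₜ[K] (x^3 * y)
          + (a * (x^2*y)) ⊗ₜ[K] (x * y) - (a * (x^2*y)) ⊗ₜ[K] (x^3 * y)) := by
    intro a
    have h := tw2 ρ θ (ζ^2) h4 hρ1 t11 t12 t13 t14 t21 hθ22 hθ23 t24 t31 hθ32 hθ33 t34
      t41 t42 t43 t44 a x y (x^3*y) (x^2*y) (x*y) hρ2y hρ3y hρ4y h3x h4x
    rw [h, hρ2x]
  have F3 : ∀ a : SecondAlg K ζ,
      twMul ρ θ (a ⊗ₜ[K] (x^3)) (y ⊗ₜ[K] y) = (2:K)⁻¹ •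
        ((a * y) ⊗ₜ[K] (x^3 * y) + (a * y) ⊗ₜ[K] (x * y)
          + (a * (x^2*y)) ⊗ₜ[K] (x^3 * y) - (a * (x^2*y)) ⊗ₜ[K] (x * y)) := by
    intro a
    have h := tw2 ρ θ (ζ^2) h4 hρ1 t11 t12 t13 t14 t21 hθ22 hθ23 t24 t31 hθ32 hθ33 t34
      t41 t42 t43 t44 a (x^3) y (x^3*y) (x^2*y) (x*y) hρ2y hρ3y hρ4y h3x3 h4x3
    rw [h, hρ2x3]
  have F2 : twMul ρ θ ((x^2) ⊗ₜ[K] (x^2)) (y ⊗ₜ[K] y) = (2:K)⁻¹ •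
        ((x^2 * y) ⊗ₜ[K] (x^2 * y) + (x^2 * y) ⊗ₜ[K] (x^2 * y)
          + (x^2 * (x^2*y)) ⊗ₜ[K] (x^2 * y) - (x^2 * (x^2*y)) ⊗ₜ[K] (x^2 * y)) := by
    have h := tw2 ρ θ (ζ^2) h4 hρ1 t11 t12 t13 t14 t21 hθ22 hθ23 t24 t31 hθ32 hθ33 t34
      t41 t42 t43 t44 (x^2) (x^2) y (x^3*y) (x^2*y) (x*y) hρ2y hρ3y hρ4y h3x2 h4x2
    rw [h, hρ2x2]
  -- coproduct computations
  have hΔx2 : Δ (x^2) = (x^2) ⊗ₜ[K] (x^2) := by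
    have h : Δ (x^2) = twMul ρ θ (Δ x) (Δ x) := by rw [pow_two]; exact hΔm x x
    rw [h, hΔx, twMul_smul_left, twMul_smul_right]
    simp only [twMul_add_left, twMul_add_right, twMul_sub_left, twMul_sub_right]
    simp only [E11, E13, E31, E33]
    simp only [exx, ex3, e3x, e33]
    letI : AddCommGroup (SecondAlg K ζ) := inferInstance
    match_scalars <;> (try field_simp) <;> (try norm_num)
  have hΔx3 : Δ (x^3) = (2:K)⁻¹ •
      ((x^3) ⊗ₜ[K] (x^3) + (x^3) ⊗ₜ[K] x + x ⊗ₜ[K] (x^3) - x ⊗ₜ[K] x) := by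
    have h : Δ (x^3) = twMul ρ θ (Δ (x^2)) (Δ x) := by rw [pow_succ]; exact hΔm (x^2) x
    rw [h, hΔx2, hΔx, twMul_smul_right]
    simp only [twMul_add_right, twMul_sub_right]
    simp only [E21, E23]
    simp only [e2x, e23]
  have hτ : (ι * ζ^2)^2 = -1 := by
    have : (ι * ζ^2)^2 = ι^2 * ζ^4 := by ring
    rw [this, hi2, hζ]; ring
  have hΔw2 : Δ (w2S K ι ζ) = (w2S K ι ζ) ⊗ₜ[K] (w2S K ι ζ) := by
    rw [w2S, map_add, map_smul, map_smul, ← hxd, hΔx, hΔx3]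
    simp only [add_tmul, tmul_add, tmul_smul, ← smul_tmul']
    letI : AddCommGroup (SecondAlg K ζ) := inferInstance
    match_scalars <;> field_simp <;>
      first
        | linear_combination (2:K) * hτ
        | linear_combination (-2:K) * hτ
        | linear_combination (4:K) * hτ
        | linear_combination (-4:K) * hτ
        | linear_combination hτ
        | linear_combination -hτ
        | ring
  have hΔw3 : Δ (w3S K ι ζ) = (w3S K ι ζ) ⊗ₜ[K] (w3S K ι ζ) := by
    rw [w3S, map_add, map_smul, map_smul, ← hxd, hΔx, hΔx3]
    simp only [add_tmul, tmul_add, tmul_smul, ← smul_tmul']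
    letI : AddCommGroup (SecondAlg K ζ) := inferInstance
    match_scalars <;> field_simp <;>
      first
        | linear_combination (2:K) * hτ
        | linear_combination (-2:K) * hτ
        | linear_combination (4:K) * hτ
        | linear_combination (-4:K) * hτ
        | linear_combination hτ
        | linear_combination -hτ
        | ring
  have fx1 : x * (x^2*y) = x^3*y := by rw [← mul_assoc, ← pow_succ']
  have fx3 : x^3 * (x^2*y) = x*y := by
    rw [← mul_assoc, ← pow_add, show x^(3+2) = x from hx5]
  have fx2 : x^2 * (x^2*y) = y := by
    rw [← mul_assoc, ← pow_add, show x^(2+2) = (1 : SecondAlg K ζ) from hx4, one_mul]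
  have hΔxy : Δ (x*y) = (x*y) ⊗ₜ[K] (x*y) := by
    rw [hΔm x y, hΔx, hΔy, twMul_smul_left]
    simp only [twMul_add_left, twMul_sub_left]
    rw [F1 x, F1 (x^3), F3 x, F3 (x^3)]
    rw [fx1, fx3]
    letI : AddCommGroup (SecondAlg K ζ) := inferInstance
    match_scalars <;> (try field_simp) <;> (try norm_num)
  have hΔx3y : Δ (x^3*y) = (x^3*y) ⊗ₜ[K] (x^3*y) := by
    rw [hΔm (x^3) y, hΔx3, hΔy, twMul_smul_left]
    simp only [twMul_add_left, twMul_sub_left]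
    rw [F1 x, F1 (x^3), F3 x, F3 (x^3)]
    rw [fx1, fx3]
    letI : AddCommGroup (SecondAlg K ζ) := inferInstance
    match_scalars <;> (try field_simp) <;> (try norm_num)
  have hΔx2y : Δ (x^2*y) = (x^2*y) ⊗ₜ[K] (x^2*y) := by
    rw [hΔm (x^2) y, hΔx2, hΔy, F2, fx2]
    letI : AddCommGroup (SecondAlg K ζ) := inferInstance
    match_scalars <;> (try field_simp) <;> (try norm_num)
  -- counit computations
  have hεx2 : ε (x^2) = 1 := by rw [map_pow, hεx, one_pow]
  have hεx3 : ε (x^3) = 1 := by rw [map_pow, hεx, one_pow]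
  have hεw2 : ε (w2S K ι ζ) = 1 := by
    rw [w2S, map_add, map_smul, map_smul, map_pow, ← hxd, hεx, smul_eq_mul, smul_eq_mul]
    field_simp
    norm_num
  have hεw3 : ε (w3S K ι ζ) = 1 := by
    rw [w3S, map_add, map_smul, map_smul, map_pow, ← hxd, hεx, smul_eq_mul, smul_eq_mul]
    field_simp
    norm_num
  have hεe2 : ε (x^3 * y) = 1 := by rw [map_mul, hεx3, hεy, one_mul]
  have hεe3 : ε (x^2 * y) = 1 := by rw [map_mul, hεx2, hεy, one_mul]
  have hεe4 : ε (x * y) = 1 := by rw [map_mul, hεx, hεy, one_mul]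
  intro j
  fin_cases j
  · exact ⟨hΔ1, map_one ε⟩
  · exact ⟨hΔw2, hεw2⟩
  · exact ⟨hΔw3, hεw3⟩
  · exact ⟨hΔx2, hεx2⟩
  · exact ⟨hΔy, hεy⟩
  · exact ⟨hΔx3y, hεe2⟩
  · exact ⟨hΔx2y, hεe3⟩
  · exact ⟨hΔxy, hεe4⟩
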